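/- arXiv:1612.06343 — 5 statements merged into one kernel-verified Lean document; each statement's English description precedes it below -/
import Mathlib

section
/- Let μ be a Borel probability measure on ℝⁿ all of whose moments are finite (∫‖x‖ᵏ dμ < ∞ for every k), and let ν be a rotational symmetrization of μ, i.e. a Borel probability measure on ℝⁿ that is invariant under every orthogonal transformation and whose pushforward under x ↦ ‖x‖ equals that of μ. Then for every positive integer k, the k-th eccentricity tensor of μ is orthogonal to the k-th moment tensor of ν: in coordinates, ∑_{i : Fin k → Fin n} (Mᵏ_μ(i) − Mᵏ_ν(i)) · Mᵏ_ν(i) = 0, where Mᵏ_μ(i) = ∫ ∏_{j=1}^{k} x_{i(j)} dμ(x). Consequently ∑_i Mᵏ_μ(i)² = ∑_i Mᵏ_ν(i)² + ∑_i (Mᵏ_μ(i) − Mᵏ_ν(i))². -/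
open MeasureTheory ProbabilityTheory Finset
open scoped RealInnerProductSpace

/-!
Expanding `⟪x, y⟫ ^ k = ∑ᵢ (∏ⱼ x (i j)) (∏ⱼ y (i j))` gives
`∑ᵢ M_ρ(i) M_ν(i) = ∫ x, ∫ y, ⟪x, y⟫ ^ k ∂ν ∂ρ`. Since `ν` is rotation invariant, the inner integral
depends on `x` only through `‖x‖`, and by homogeneity equals `c * ‖x‖ ^ k`. Hence
`∑ᵢ M_ρ(i) M_ν(i) = c * ∫ ‖x‖ ^ k ∂ρ`, which is the same for `ρ = μ` and `ρ = ν` because they have the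
same radial distribution: this is the orthogonality, and Pythagoras follows.
-/

noncomputable def momentTensor {ι : Type*} (μ : Measure (EuclideanSpace ℝ ι)) {k : ℕ}
    (i : Fin k → ι) : ℝ :=
  ∫ x, ∏ j, x (i j) ∂μ

theorem Finset.sum_sq_eq_sum_sq_add_sum_sub_sq {α : Type*} {s : Finset α} {a b : α → ℝ}
    (h : ∑ i ∈ s, (a i - b i) * b i = 0) :
    ∑ i ∈ s, a i ^ 2 = ∑ i ∈ s, b i ^ 2 + ∑ i ∈ s, (a i - b i) ^ 2 := by
  have hsq : ∀ i, a i ^ 2 = b i ^ 2 + (a i - b i) ^ 2 + 2 * ((a i - b i) * b i) :=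
    fun i => by ring
  simp only [hsq, sum_add_distrib, ← mul_sum, h, mul_zero, add_zero]

section Coordinates

variable {ι : Type*} [Fintype ι] {k : ℕ}

theorem abs_prod_apply_le_norm_pow (x : EuclideanSpace ℝ ι) (i : Fin k → ι) :
    |∏ j, x (i j)| ≤ ‖x‖ ^ k := by
  rw [abs_prod]
  calc ∏ j, |x (i j)| ≤ ∏ _j : Fin k, ‖x‖ :=
        prod_le_prod (fun _ _ => abs_nonneg _) fun j _ => PiLp.norm_apply_le x (i j)
    _ = ‖x‖ ^ k := by simp

theorem sum_prod_mul_prod_eq_inner_pow (x y : EuclideanSpace ℝ ι) (k : ℕ) :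
    ∑ i : Fin k → ι, (∏ j, x (i j)) * ∏ j, y (i j) = ⟪x, y⟫ ^ k := by
  simp only [PiLp.inner_apply, RCLike.inner_apply, conj_trivial, Fintype.sum_pow,
    ← prod_mul_distrib, mul_comm]

theorem integrable_prod_apply {ρ : Measure (EuclideanSpace ℝ ι)}
    (h : Integrable (fun x => ‖x‖ ^ k) ρ) (i : Fin k → ι) :
    Integrable (fun x : EuclideanSpace ℝ ι => ∏ j, x (i j)) ρ :=
  h.mono (by fun_prop) <| ae_of_all _ fun x => by
    simpa only [Real.norm_eq_abs, abs_pow, abs_norm] using abs_prod_apply_le_norm_pow x i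

theorem sum_momentTensor_mul_momentTensor {ρ ν : Measure (EuclideanSpace ℝ ι)}
    (hρ : Integrable (fun x => ‖x‖ ^ k) ρ) (hν : Integrable (fun x => ‖x‖ ^ k) ν) :
    ∑ i : Fin k → ι, momentTensor ρ i * momentTensor ν i = ∫ x, ∫ y, ⟪x, y⟫ ^ k ∂ν ∂ρ := by
  have hinner : ∀ x,
      ∫ y, ⟪x, y⟫ ^ k ∂ν = ∑ i : Fin k → ι, (∏ j, x (i j)) * momentTensor ν i := by
    intro x
    simp only [← sum_prod_mul_prod_eq_inner_pow, momentTensor, ← integral_const_mul]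
    exact integral_finsetSum _ fun i _ => (integrable_prod_apply hν i).const_mul _
  simp only [hinner, momentTensor]
  rw [integral_finsetSum _ fun i _ => (integrable_prod_apply hρ i).mul_const _]
  simp only [integral_mul_const]

end Coordinates

section Rotation

variable {E : Type*} [NormedAddCommGroup E] [InnerProductSpace ℝ E] [MeasurableSpace E]
  [BorelSpace E] {ν : Measure E}

theorem integral_comp_inner_eq_of_norm_eq (hrot : ∀ Q : E ≃ₗᵢ[ℝ] E, Measure.map Q ν = ν)
    {x x' : E} (h : ‖x‖ = ‖x'‖) (f : ℝ → ℝ) :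
    ∫ y, f ⟪x, y⟫ ∂ν = ∫ y, f ⟪x', y⟫ ∂ν := by
  set Q : E ≃ₗᵢ[ℝ] E := Submodule.reflection (ℝ ∙ (x' - x))ᗮ
  have hQx : Q x' = x := Submodule.reflection_sub h.symm
  have hQ : MeasurePreserving Q ν ν := ⟨Q.continuous.measurable, hrot Q⟩
  rw [← hQ.integral_comp Q.toHomeomorph.measurableEmbedding]
  simp [← hQx, Q.inner_map_map]

theorem exists_integral_inner_pow_eq_norm_pow_mul
    (hrot : ∀ Q : E ≃ₗᵢ[ℝ] E, Measure.map Q ν = ν) (k : ℕ) :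
    ∃ c : ℝ, ∀ x : E, ∫ y, ⟪x, y⟫ ^ k ∂ν = ‖x‖ ^ k * c := by
  cases subsingleton_or_nontrivial E with
  | inl _ => exact ⟨ν.real Set.univ, fun x => by simp [Subsingleton.elim x 0, mul_comm]⟩
  | inr _ =>
    obtain ⟨e, he⟩ := exists_norm_eq E zero_le_one
    refine ⟨∫ y, ⟪e, y⟫ ^ k ∂ν, fun x => ?_⟩
    have hnorm : ‖x‖ = ‖‖x‖ • e‖ := by simp [norm_smul, he]
    rw [integral_comp_inner_eq_of_norm_eq hrot hnorm (· ^ k), ← integral_const_mul]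
    simp only [real_inner_smul_left, mul_pow]

end Rotation

theorem eccentricity_orthogonality_general (n : ℕ)
    (μ ν : Measure (EuclideanSpace ℝ (Fin n)))
    (hmom : ∀ k : ℕ, Integrable (fun x => ‖x‖ ^ k) μ)
    (hrot : ∀ Q : EuclideanSpace ℝ (Fin n) ≃ₗᵢ[ℝ] EuclideanSpace ℝ (Fin n),
      Measure.map Q ν = ν)
    (hrad : Measure.map (fun x => ‖x‖) μ = Measure.map (fun x => ‖x‖) ν)
    (k : ℕ) :
    (∑ i : Fin k → Fin n,
        ((∫ x, ∏ j, x (i j) ∂μ) - ∫ x, ∏ j, x (i j) ∂ν) * ∫ x, ∏ j, x (i j) ∂ν = 0)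
    ∧ (∑ i : Fin k → Fin n, (∫ x, ∏ j, x (i j) ∂μ) ^ 2
        = (∑ i : Fin k → Fin n, (∫ x, ∏ j, x (i j) ∂ν) ^ 2)
          + ∑ i : Fin k → Fin n,
              ((∫ x, ∏ j, x (i j) ∂μ) - ∫ x, ∏ j, x (i j) ∂ν) ^ 2) := by
  have hradial : IdentDistrib (fun x => ‖x‖ ^ k) (fun x => ‖x‖ ^ k) μ ν :=
    IdentDistrib.comp ⟨measurable_norm.aemeasurable, measurable_norm.aemeasurable, hrad⟩
      (continuous_pow k).measurable
  have hmomν : Integrable (fun x => ‖x‖ ^ k) ν := hradial.integrable_iff.mp (hmom k)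
  obtain ⟨c, hc⟩ := exists_integral_inner_pow_eq_norm_pow_mul hrot k
  have orth :
      ∑ i : Fin k → Fin n, (momentTensor μ i - momentTensor ν i) * momentTensor ν i = 0 := by
    simp only [sub_mul, sum_sub_distrib, sum_momentTensor_mul_momentTensor (hmom k) hmomν,
      sum_momentTensor_mul_momentTensor hmomν hmomν, hc, integral_mul_const, hradial.integral_eq,
      sub_self]
  exact ⟨orth, sum_sq_eq_sum_sq_add_sum_sub_sq orth⟩

/-- Orthogonality of the eccentricity tensor of `μ` to the moment tensor of its
rotational symmetrization `ν`, and the resulting Pythagorean identity. -/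
theorem eccentricity_orthogonality (n : ℕ)
    (μ ν : Measure (EuclideanSpace ℝ (Fin n)))
    [IsProbabilityMeasure μ] [IsProbabilityMeasure ν]
    (hmom : ∀ k : ℕ, Integrable (fun x => ‖x‖ ^ k) μ)
    (hrot : ∀ Q : EuclideanSpace ℝ (Fin n) ≃ₗᵢ[ℝ] EuclideanSpace ℝ (Fin n),
      Measure.map Q ν = ν)
    (hrad : Measure.map (fun x => ‖x‖) μ = Measure.map (fun x => ‖x‖) ν)
    (k : ℕ) (hk : 0 < k) :
    (∑ i : Fin k → Fin n,
        ((∫ x, ∏ j, x (i j) ∂μ) - ∫ x, ∏ j, x (i j) ∂ν) * ∫ x, ∏ j, x (i j) ∂ν = 0)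
    ∧ (∑ i : Fin k → Fin n, (∫ x, ∏ j, x (i j) ∂μ) ^ 2
        = (∑ i : Fin k → Fin n, (∫ x, ∏ j, x (i j) ∂ν) ^ 2)
          + ∑ i : Fin k → Fin n,
              ((∫ x, ∏ j, x (i j) ∂μ) - ∫ x, ∏ j, x (i j) ∂ν) ^ 2) :=
  eccentricity_orthogonality_general n μ ν hmom hrot hrad k
end

section
/- Let μ be a Borel probability measure on ℝⁿ and let k be a positive integer such that ∫‖x‖ᵏ dμ(x) < ∞. Let ν be a rotational symmetrization of μ. Then ∫∫ ⟨x,y⟩ᵏ dμ(x)dμ(y) ≥ ∫∫ ⟨x,y⟩ᵏ dν(x)dν(y). -/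
open MeasureTheory
open scoped RealInnerProductSpace

/-!
Expanding `⟪x, y⟫ ^ k` in coordinates writes the energy `E(σ, τ) = ∫∫ ⟪x, y⟫ ^ k dσ dτ` as
`∑ f, m_f(σ) * m_f(τ)`, where `m_f` runs over the coordinate moments of degree `k`; hence `E` is a
positive semidefinite bilinear form and `2 E(μ, ν) ≤ E(μ, μ) + E(ν, ν)`. Rotation invariance of `ν`
makes `x ↦ ∫ ⟪x, y⟫ ^ k dν(y)` equal to `‖x‖ ^ k` times a constant, so `E(μ, ν) = E(ν, ν)` because
`μ` and `ν` have the same radial law.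
-/

section Moments

variable {ι : Type*} [Fintype ι] {k : ℕ}

lemma EuclideanSpace.inner_pow_eq_sum_prod (x y : EuclideanSpace ℝ ι) :
    ⟪x, y⟫ ^ k = ∑ f : Fin k → ι, (∏ j, x (f j)) * ∏ j, y (f j) := by
  simp only [PiLp.inner_apply, RCLike.inner_apply, conj_trivial, Fintype.sum_pow,
    ← Finset.prod_mul_distrib, mul_comm]

lemma integrable_prod_apply_of_integrable_norm_pow {μ : Measure (EuclideanSpace ℝ ι)}
    (hμ : Integrable (fun x => ‖x‖ ^ k) μ) (f : Fin k → ι) :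
    Integrable (fun x : EuclideanSpace ℝ ι => ∏ j, x (f j)) μ := by
  refine hμ.mono (by fun_prop) (ae_of_all _ fun x => ?_)
  rw [norm_prod, norm_pow, norm_norm]
  simpa using Finset.prod_le_prod (s := Finset.univ) (fun j _ => norm_nonneg _)
    fun j _ => PiLp.norm_apply_le x (f j)

lemma integral_integral_inner_pow_eq_sum {σ τ : Measure (EuclideanSpace ℝ ι)}
    (hσ : Integrable (fun x => ‖x‖ ^ k) σ) (hτ : Integrable (fun x => ‖x‖ ^ k) τ) :
    ∫ x, ∫ y, ⟪x, y⟫ ^ k ∂τ ∂σ =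
      ∑ f : Fin k → ι, (∫ x, ∏ j, x (f j) ∂σ) * ∫ y, ∏ j, y (f j) ∂τ := by
  have hτ' f := integrable_prod_apply_of_integrable_norm_pow hτ f
  have hσ' f := integrable_prod_apply_of_integrable_norm_pow hσ f
  simp only [EuclideanSpace.inner_pow_eq_sum_prod,
    integral_finsetSum _ fun f _ => (hτ' f).const_mul _, integral_const_mul,
    integral_finsetSum _ fun f _ => (hσ' f).mul_const _, integral_mul_const]

lemma two_mul_integral_integral_inner_pow_le {σ τ : Measure (EuclideanSpace ℝ ι)}
    (hσ : Integrable (fun x => ‖x‖ ^ k) σ) (hτ : Integrable (fun x => ‖x‖ ^ k) τ) :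
    2 * ∫ x, ∫ y, ⟪x, y⟫ ^ k ∂τ ∂σ ≤
      (∫ x, ∫ y, ⟪x, y⟫ ^ k ∂σ ∂σ) + ∫ x, ∫ y, ⟪x, y⟫ ^ k ∂τ ∂τ := by
  simp only [integral_integral_inner_pow_eq_sum, hσ, hτ, Finset.mul_sum,
    ← Finset.sum_add_distrib]
  refine Finset.sum_le_sum fun f _ => ?_
  rw [← mul_assoc, ← sq, ← sq]
  exact two_mul_le_add_sq _ _

end Moments

section Radial

variable {E : Type*} [NormedAddCommGroup E] [MeasurableSpace E] [OpensMeasurableSpace E]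

lemma integral_comp_norm_eq_of_map_norm_eq {μ ν : Measure E}
    (h : μ.map (‖·‖) = ν.map (‖·‖)) {g : ℝ → ℝ} (hg : Measurable g) :
    ∫ x, g ‖x‖ ∂μ = ∫ x, g ‖x‖ ∂ν := by
  rw [← integral_map measurable_norm.aemeasurable hg.aestronglyMeasurable, h,
    integral_map measurable_norm.aemeasurable hg.aestronglyMeasurable]

lemma integrable_comp_norm_of_map_norm_eq {μ ν : Measure E}
    (h : μ.map (‖·‖) = ν.map (‖·‖)) {g : ℝ → ℝ} (hg : Measurable g)
    (hμ : Integrable (fun x => g ‖x‖) μ) : Integrable (fun x => g ‖x‖) ν := by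
  have hgν : Integrable g (ν.map (‖·‖)) :=
    h ▸ (integrable_map_measure hg.aestronglyMeasurable measurable_norm.aemeasurable).2 hμ
  exact (integrable_map_measure hg.aestronglyMeasurable measurable_norm.aemeasurable).1 hgν

end Radial

section RotationInvariant

variable {E : Type*} [NormedAddCommGroup E] [InnerProductSpace ℝ E] [MeasurableSpace E]
  [BorelSpace E] {k : ℕ}

lemma integral_inner_pow_eq_norm_pow_mul {ν : Measure E}
    (hν : ∀ Q : E ≃ₗᵢ[ℝ] E, Measure.map Q ν = ν) {e : E} (he : ‖e‖ = 1) (x : E) :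
    ∫ y, ⟪x, y⟫ ^ k ∂ν = ‖x‖ ^ k * ∫ y, ⟪e, y⟫ ^ k ∂ν := by
  let Q := Submodule.reflection (ℝ ∙ (‖x‖ • e - x))ᗮ
  have hQ : Q (‖x‖ • e) = x := Submodule.reflection_sub (by simp [norm_smul, he])
  have hQν : MeasurePreserving Q ν ν := ⟨Q.continuous.measurable, hν Q⟩
  calc ∫ y, ⟪x, y⟫ ^ k ∂ν = ∫ y, ⟪x, Q y⟫ ^ k ∂ν :=
        (hQν.integral_comp Q.toHomeomorph.measurableEmbedding _).symm
    _ = ∫ y, (‖x‖ * ⟪e, y⟫) ^ k ∂ν := by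
        congr! 3 with y
        nth_rw 1 [← hQ]
        rw [Q.inner_map_map, real_inner_smul_left]
    _ = ∫ y, ‖x‖ ^ k * ⟪e, y⟫ ^ k ∂ν := by simp only [mul_pow]
    _ = ‖x‖ ^ k * ∫ y, ⟪e, y⟫ ^ k ∂ν := integral_const_mul _ _

lemma integral_integral_inner_pow_eq_of_map_norm_eq [Nontrivial E] {μ ν : Measure E}
    (hν : ∀ Q : E ≃ₗᵢ[ℝ] E, Measure.map Q ν = ν) (h : μ.map (‖·‖) = ν.map (‖·‖)) :
    ∫ x, ∫ y, ⟪x, y⟫ ^ k ∂ν ∂μ = ∫ x, ∫ y, ⟪x, y⟫ ^ k ∂ν ∂ν := by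
  obtain ⟨e, he⟩ := exists_norm_eq E zero_le_one
  set c := ∫ y, ⟪e, y⟫ ^ k ∂ν
  have hc : ∀ x, ∫ y, ⟪x, y⟫ ^ k ∂ν = ‖x‖ ^ k * c := integral_inner_pow_eq_norm_pow_mul hν he
  simp only [hc, integral_mul_const]
  rw [integral_comp_norm_eq_of_map_norm_eq h (g := (· ^ k)) (by fun_prop)]

end RotationInvariant

theorem energy_ge_rotational_symmetrization_general (n : ℕ)
    (μ ν : Measure (EuclideanSpace ℝ (Fin n)))
    [IsProbabilityMeasure μ] [IsProbabilityMeasure ν]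
    (k : ℕ)
    (hmom : Integrable (fun x => ‖x‖ ^ k) μ)
    (hrot : ∀ Q : EuclideanSpace ℝ (Fin n) ≃ₗᵢ[ℝ] EuclideanSpace ℝ (Fin n),
      Measure.map Q ν = ν)
    (hrad : Measure.map (fun x => ‖x‖) μ = Measure.map (fun x => ‖x‖) ν) :
    (∫ x, ∫ y, ⟪x, y⟫ ^ k ∂μ ∂μ) ≥ ∫ x, ∫ y, ⟪x, y⟫ ^ k ∂ν ∂ν := by
  rcases subsingleton_or_nontrivial (EuclideanSpace ℝ (Fin n)) with hE | hE
  · simp [Subsingleton.elim _ (0 : EuclideanSpace ℝ (Fin n))]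
  have hmomν : Integrable (fun x => ‖x‖ ^ k) ν :=
    integrable_comp_norm_of_map_norm_eq hrad (g := (· ^ k)) (by fun_prop) hmom
  have hcross := integral_integral_inner_pow_eq_of_map_norm_eq (k := k) hrot hrad
  have hpsd := two_mul_integral_integral_inner_pow_le hmom hmomν
  linarith

/-- The rotational symmetrization of a measure minimizes the `k`-th inner product
energy among measures with the given radial distribution. -/
theorem energy_ge_rotational_symmetrization (n : ℕ)
    (μ ν : Measure (EuclideanSpace ℝ (Fin n)))
    [IsProbabilityMeasure μ] [IsProbabilityMeasure ν]
    (k : ℕ) (hk : 0 < k)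
    (hmom : Integrable (fun x => ‖x‖ ^ k) μ)
    (hrot : ∀ Q : EuclideanSpace ℝ (Fin n) ≃ₗᵢ[ℝ] EuclideanSpace ℝ (Fin n),
      Measure.map Q ν = ν)
    (hrad : Measure.map (fun x => ‖x‖) μ = Measure.map (fun x => ‖x‖) ν) :
    (∫ x, ∫ y, ⟪x, y⟫ ^ k ∂μ ∂μ) ≥ ∫ x, ∫ y, ⟪x, y⟫ ^ k ∂ν ∂ν :=
  energy_ge_rotational_symmetrization_general n μ ν k hmom hrot hrad
end

section
/- Let z₁, …, z_m be unit vectors in ℂⁿ with m ≥ 2, and let c_max = max_{i ≠ j} |⟨z_i, z_j⟩|. Then for every positive integer k, (c_max)^{2k} ≥ (1/(m−1)) · (m / C(n+k−1, k) − 1), where C(n+k−1, k) is the binomial coefficient. -/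
/-!
The map `x ↦ x^⊗k`, written in an orthonormal basis of the symmetric tensors (whose dimension is
`N = C(n+k-1, k)`), turns `⟪x, y⟫` into `⟪x, y⟫^k`. So it suffices to treat `k = 1` in dimension
`N`: for unit vectors `w₁, …, w_m` with cross-correlations `|⟪w_i, w_j⟫| ≤ c` the frame
potential `∑ |⟪w_i, w_j⟫|²` is at most `m + m(m-1)c²`, and at least `m²/N` by Cauchy–Schwarz
on the diagonal of the frame operator `∑ w_i w_i*`, whose trace is `m`.
-/

open scoped ComplexInnerProductSpace
open Finset ComplexConjugate

section Frame

variable (𝕜 : Type*) [RCLike 𝕜] {ι I E : Type*} [Fintype ι] [Fintype I]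
  [NormedAddCommGroup E] [InnerProductSpace 𝕜 E]

noncomputable def framePotential (w : I → E) : ℝ :=
  ∑ i, ∑ j, ‖inner 𝕜 (w i) (w j)‖ ^ 2

variable {𝕜}

/-- The Gram matrix `W*W` and the frame operator `WW*` have the same Frobenius norm. -/
theorem framePotential_eq_sum_norm_frameOperator_sq (w : I → EuclideanSpace 𝕜 ι) :
    framePotential 𝕜 w = ∑ a, ∑ b, ‖∑ i, w i a * conj (w i b)‖ ^ 2 := by
  apply RCLike.ofReal_injective (K := 𝕜)
  simp only [framePotential, PiLp.inner_apply, RCLike.inner_apply, RCLike.ofReal_pow,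
    ← RCLike.mul_conj, map_sum, map_mul, RCLike.conj_conj, sum_mul_sum]
  simp_rw [sum_comm (s := (univ : Finset I)) (t := (univ : Finset ι))]
  refine sum_congr rfl fun a _ => sum_congr rfl fun b _ => ?_
  rw [sum_comm]
  exact sum_congr rfl fun i _ => sum_congr rfl fun j _ => by ring

theorem sq_sum_norm_sq_le_card_mul_framePotential (w : I → EuclideanSpace 𝕜 ι) :
    (∑ i, ‖w i‖ ^ 2) ^ 2 ≤ Fintype.card ι * framePotential 𝕜 w := by
  set d : ι → ℝ := fun a => ∑ i, ‖w i a‖ ^ 2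
  have hsum : ∑ i, ‖w i‖ ^ 2 = ∑ a, d a := by
    simp_rw [EuclideanSpace.norm_sq_eq]
    exact sum_comm
  have hdiag : ∀ a, d a ^ 2 ≤ ∑ b, ‖∑ i, w i a * conj (w i b)‖ ^ 2 := by
    intro a
    have hda : ‖∑ i, w i a * conj (w i a)‖ = d a := by
      simp only [RCLike.mul_conj, ← RCLike.ofReal_pow, ← RCLike.ofReal_sum, RCLike.norm_ofReal,
        abs_of_nonneg (sum_nonneg fun i _ => sq_nonneg ‖w i a‖), d]
    rw [← hda]
    exact single_le_sum (f := fun b => ‖∑ i, w i a * conj (w i b)‖ ^ 2)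
      (fun _ _ => sq_nonneg _) (mem_univ a)
  rw [hsum, framePotential_eq_sum_norm_frameOperator_sq]
  calc (∑ a, d a) ^ 2 ≤ Fintype.card ι * ∑ a, d a ^ 2 := sq_sum_le_card_mul_sum_sq
    _ ≤ _ := by gcongr with a; exact hdiag a

theorem sq_sum_norm_sq_le_finrank_mul_framePotential [FiniteDimensional 𝕜 E] (w : I → E) :
    (∑ i, ‖w i‖ ^ 2) ^ 2 ≤ Module.finrank 𝕜 E * framePotential 𝕜 w := by
  have h := sq_sum_norm_sq_le_card_mul_framePotential fun i => (stdOrthonormalBasis 𝕜 E).repr (w i)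
  simpa [framePotential, LinearIsometryEquiv.inner_map_map] using h

theorem framePotential_le_of_norm_inner_sq_le [DecidableEq I] {w : I → E} (hw : ∀ i, ‖w i‖ = 1)
    {c : ℝ} (hc : ∀ i j, i ≠ j → ‖inner 𝕜 (w i) (w j)‖ ^ 2 ≤ c) :
    framePotential 𝕜 w ≤ Fintype.card I + Fintype.card I * (Fintype.card I - 1) * c := by
  have hrow : ∀ i, ∑ j, ‖inner 𝕜 (w i) (w j)‖ ^ 2 ≤ 1 + (Fintype.card I - 1) * c := by
    intro i
    rw [← add_sum_erase _ _ (mem_univ i), inner_self_eq_norm_sq_to_K, hw i]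
    gcongr
    · simp
    · calc _ ≤ #(univ.erase i) • c :=
            sum_le_card_nsmul _ _ _ fun j hj => hc i j (ne_of_mem_erase hj).symm
        _ = (Fintype.card I - 1) * c := by
            rw [card_erase_of_mem (mem_univ i), card_univ, nsmul_eq_mul,
              Nat.cast_pred (Fintype.card_pos_iff.2 ⟨i⟩)]
  calc framePotential 𝕜 w ≤ ∑ _i : I, (1 + (Fintype.card I - 1) * c) := sum_le_sum fun i _ => hrow i
    _ = _ := by simp only [sum_const, card_univ, nsmul_eq_mul]; ring

theorem card_le_finrank_mul_of_norm_inner_sq_le [FiniteDimensional 𝕜 E] [Nonempty I]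
    {w : I → E} (hw : ∀ i, ‖w i‖ = 1) {c : ℝ} (hc : ∀ i j, i ≠ j → ‖inner 𝕜 (w i) (w j)‖ ^ 2 ≤ c) :
    (Fintype.card I : ℝ) ≤ Module.finrank 𝕜 E * (1 + (Fintype.card I - 1) * c) := by
  classical
  have hm : (0 : ℝ) < Fintype.card I := by exact_mod_cast Fintype.card_pos
  refine le_of_mul_le_mul_left ?_ hm
  calc (Fintype.card I : ℝ) * Fintype.card I = (∑ i, ‖w i‖ ^ 2) ^ 2 := by simp [hw, sq]
    _ ≤ Module.finrank 𝕜 E * framePotential 𝕜 w := sq_sum_norm_sq_le_finrank_mul_framePotential w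
    _ ≤ Module.finrank 𝕜 E * (Fintype.card I + Fintype.card I * (Fintype.card I - 1) * c) := by
        gcongr
        exact framePotential_le_of_norm_inner_sq_le hw hc
    _ = Fintype.card I * (Module.finrank 𝕜 E * (1 + (Fintype.card I - 1) * c)) := by ring

end Frame

section Veronese

variable {𝕜 ι : Type*} [RCLike 𝕜] [Fintype ι] [DecidableEq ι]

/-- Coordinates of `x^⊗k` in the orthonormal basis of symmetric tensors indexed by monomials;
the weight `√(multinomial α)` is what makes `inner_veronese` hold. -/
noncomputable def veronese (k : ℕ) (x : EuclideanSpace 𝕜 ι) :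
    EuclideanSpace 𝕜 (piAntidiag (univ : Finset ι) k) :=
  WithLp.toLp 2 fun α => (√(Nat.multinomial univ α.1 : ℝ) : 𝕜) * ∏ t, x t ^ α.1 t

theorem inner_veronese (k : ℕ) (x y : EuclideanSpace 𝕜 ι) :
    inner 𝕜 (veronese k x) (veronese k y) = inner 𝕜 x y ^ k := by
  simp only [PiLp.inner_apply, RCLike.inner_apply, veronese, sum_pow_eq_sum_piAntidiag]
  rw [← sum_coe_sort (piAntidiag univ k)]
  refine sum_congr rfl fun α _ => ?_
  simp only [map_mul, map_prod, map_pow, RCLike.conj_ofReal]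
  rw [mul_mul_mul_comm, ← RCLike.ofReal_mul, Real.mul_self_sqrt (Nat.cast_nonneg _),
    ← prod_mul_distrib]
  simp only [← mul_pow]
  norm_cast

theorem norm_veronese (k : ℕ) (x : EuclideanSpace 𝕜 ι) : ‖veronese k x‖ = ‖x‖ ^ k := by
  have h := inner_veronese k x x
  rw [inner_self_eq_norm_sq_to_K, inner_self_eq_norm_sq_to_K, ← pow_mul, mul_comm, pow_mul] at h
  exact_mod_cast (pow_left_inj₀ (norm_nonneg _) (by positivity) two_ne_zero).1 (by exact_mod_cast h)

theorem card_piAntidiag_univ (k : ℕ) :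
    #(piAntidiag (univ : Finset ι) k) = (Fintype.card ι + k - 1).choose k := by
  rw [← map_sym_eq_piAntidiag, card_map, sym_univ, card_univ, Sym.card_sym_eq_choose]

end Veronese

theorem welch_bound_general (n m : ℕ) (hm : 2 ≤ m)
    (z : Fin m → EuclideanSpace ℂ (Fin n)) (hz : ∀ i, ‖z i‖ = 1)
    (cmax : ℝ)
    (hcmax : IsGreatest {r : ℝ | ∃ i j : Fin m, i ≠ j ∧ r = ‖⟪z i, z j⟫‖} cmax)
    (k : ℕ) :
    cmax ^ (2 * k)
      ≥ (1 / ((m : ℝ) - 1)) * ((m : ℝ) / (Nat.choose (n + k - 1) k : ℝ) - 1) := by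
  have : Nonempty (Fin m) := ⟨⟨0, by omega⟩⟩
  have hunit : ∀ i, ‖veronese k (z i)‖ = 1 := fun i => by rw [norm_veronese, hz i, one_pow]
  have hcross : ∀ i j, i ≠ j → ‖⟪veronese k (z i), veronese k (z j)⟫‖ ^ 2 ≤ cmax ^ (2 * k) := by
    intro i j hij
    rw [inner_veronese, norm_pow, ← pow_mul, mul_comm]
    exact pow_le_pow_left₀ (norm_nonneg _) (hcmax.2 ⟨i, j, hij, rfl⟩) _
  have hwelch := card_le_finrank_mul_of_norm_inner_sq_le hunit hcross
  rw [finrank_euclideanSpace, Fintype.card_coe, card_piAntidiag_univ, Fintype.card_fin,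
    Fintype.card_fin] at hwelch
  have hm1 : (0 : ℝ) < m - 1 := by
    have : (2 : ℝ) ≤ m := by exact_mod_cast hm
    linarith
  have hN : (0 : ℝ) < (n + k - 1).choose k := by
    refine (Nat.cast_nonneg _).lt_of_ne fun hN0 => ?_
    rw [← hN0, zero_mul] at hwelch
    linarith
  rw [ge_iff_le, one_div, inv_mul_le_iff₀ hm1, sub_le_iff_le_add, div_le_iff₀ hN]
  linarith

/-- The Welch bounds: for unit vectors `z₁, …, z_m` in `ℂⁿ` with maximal
cross-correlation `c_max`, one has `c_max^{2k} ≥ (m / C(n+k-1,k) - 1)/(m-1)`. -/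
theorem welch_bound (n m : ℕ) (hm : 2 ≤ m)
    (z : Fin m → EuclideanSpace ℂ (Fin n)) (hz : ∀ i, ‖z i‖ = 1)
    (cmax : ℝ)
    (hcmax : IsGreatest {r : ℝ | ∃ i j : Fin m, i ≠ j ∧ r = ‖⟪z i, z j⟫‖} cmax)
    (k : ℕ) (hk : 0 < k) :
    cmax ^ (2 * k)
      ≥ (1 / ((m : ℝ) - 1)) * ((m : ℝ) / (Nat.choose (n + k - 1) k : ℝ) - 1) :=
  welch_bound_general n m hm z hz cmax hcmax k
end

section
/- Let x₁, …, x_m be unit vectors in ℝⁿ. Then for every positive integer k, (1/m²) ∑_{i=1}^{m} ∑_{j=1}^{m} |⟨x_i, x_j⟩|^{2k} ≥ (1·3·5⋯(2k−1)) / (n·(n+2)⋯(n+2k−2)) = ∏_{j=1}^{k} (2j−1)/(n+2j−2). -/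
/-!
Let `g` be a standard Gaussian vector in `ℝⁿ` and let `M = 𝔼[g^{⊗2k}]`: its entry at a
multi-index `f` is `∏ᵢ 𝔼[gᵢ^{cᵢ}] = ∏ᵢ (cᵢ - 1)!!`, where `cᵢ` is the multiplicity of `i` in `f`
(and `(c - 1)!! := 0` for odd `c`). For `T = ∑ᵢ xᵢ^{⊗2k}` we have `‖T‖² = ∑ᵢⱼ ⟨xᵢ, xⱼ⟩^{2k}`,
`⟨T, M⟩ = ∑ᵢ 𝔼⟨g, xᵢ⟩^{2k} = m (2k - 1)!!` and `‖M‖² = (2k - 1)!! n (n + 2) ⋯ (n + 2k - 2)`,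
so Cauchy–Schwarz `⟨T, M⟩² ≤ ‖T‖² ‖M‖²` is the bound. Both Gaussian identities follow by
induction on `k` from Wick's recursion, which pairs the first index of `f` with each of the others.
-/

open scoped RealInnerProductSpace

open Finset

namespace RealWelch

section Tuples

variable {ι : Type*} {L : ℕ}

lemma sum_eq_sum_insertNth [Fintype ι] {M : Type*} [AddCommMonoid M] (p : Fin (L + 1))
    (F : (Fin (L + 1) → ι) → M) :
    ∑ f, F f = ∑ a, ∑ g : Fin L → ι, F (p.insertNth a g) := by
  rw [← (Fin.insertNthEquiv (fun _ => ι) p).sum_comp F, Fintype.sum_prod_type]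
  rfl

lemma prod_comp_insertNth {R : Type*} [CommMonoid R] (x : ι → R) (p : Fin (L + 1)) (a : ι)
    (g : Fin L → ι) :
    ∏ t, x (Fin.insertNth (α := fun _ => ι) p a g t) = x a * ∏ t, x (g t) := by
  rw [Fin.prod_univ_succAbove _ p]
  simp

variable [DecidableEq ι]

def fiberCard (f : Fin L → ι) (i : ι) : ℕ := #{t | f t = i}

lemma fiberCard_insertNth (p : Fin (L + 1)) (a : ι) (g : Fin L → ι) (i : ι) :
    fiberCard (p.insertNth a g) i = fiberCard g i + if a = i then 1 else 0 := by
  simp only [fiberCard, card_filter]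
  rw [Fin.sum_univ_succAbove _ p]
  simp [add_comm]

lemma fiberCard_insertNth_of_ne (p : Fin (L + 1)) {a i : ι} (g : Fin L → ι) (h : i ≠ a) :
    fiberCard (p.insertNth a g) i = fiberCard g i := by
  simp [fiberCard_insertNth, Ne.symm h]

lemma sum_fiberCard [Fintype ι] (f : Fin L → ι) : ∑ i, fiberCard f i = L := by
  simp only [fiberCard, card_filter]
  rw [sum_comm]
  simp

end Tuples

def gaussianMoment : ℕ → ℕ
  | 0 => 1
  | 1 => 0
  | c + 2 => (c + 1) * gaussianMoment c

lemma gaussianMoment_succ (c : ℕ) : gaussianMoment (c + 1) = c * gaussianMoment (c - 1) := by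
  cases c <;> rfl

lemma gaussianMoment_two_mul (k : ℕ) :
    gaussianMoment (2 * k) = ∏ j ∈ range k, (2 * j + 1) := by
  induction k with
  | zero => rfl
  | succ k ih => rw [prod_range_succ, ← ih, mul_comm _ (2 * k + 1)]; rfl

section MixedMoment

variable {ι : Type*} [Fintype ι] [DecidableEq ι] {L : ℕ}

def gaussianMixedMoment (f : Fin L → ι) : ℕ := ∏ i, gaussianMoment (fiberCard f i)

lemma gaussianMixedMoment_eq_mul_prod_erase {L' : ℕ} (f : Fin L → ι) (g : Fin L' → ι) {a : ι}
    (h : ∀ i ≠ a, fiberCard f i = fiberCard g i) :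
    gaussianMixedMoment f
      = gaussianMoment (fiberCard f a) * ∏ i ∈ univ.erase a, gaussianMoment (fiberCard g i) := by
  rw [gaussianMixedMoment, ← mul_prod_erase _ _ (mem_univ a)]
  exact congrArg _ (prod_congr rfl fun i hi => by rw [h i (ne_of_mem_erase hi)])

/-- Wick's recursion: Gaussian integration by parts in the coordinate `a`. -/
lemma gaussianMixedMoment_cons (a : ι) (g : Fin (L + 1) → ι) :
    gaussianMixedMoment (Fin.cons a g : Fin (L + 2) → ι)
      = ∑ s, if g s = a then gaussianMixedMoment (s.removeNth g) else 0 := by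
  rw [← Fin.insertNth_zero']
  have h_cons := gaussianMixedMoment_eq_mul_prod_erase (Fin.insertNth 0 a g) g
    fun i hi => fiberCard_insertNth_of_ne 0 g hi
  have h_remove (s : Fin (L + 1)) (hs : g s = a) :
      gaussianMixedMoment (s.removeNth g)
        = gaussianMoment (fiberCard g a - 1)
          * ∏ i ∈ univ.erase a, gaussianMoment (fiberCard g i) := by
    have hc (i : ι) : fiberCard g i = fiberCard (s.removeNth g) i + if a = i then 1 else 0 := by
      rw [← fiberCard_insertNth, ← hs, Fin.insertNth_self_removeNth]
    rw [gaussianMixedMoment_eq_mul_prod_erase (s.removeNth g) g (a := a) fun i hi => by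
      simp [hc, Ne.symm hi], hc, if_pos rfl, Nat.add_sub_cancel]
  rw [h_cons, fiberCard_insertNth, if_pos rfl, gaussianMoment_succ, mul_assoc,
    sum_congr rfl fun s _ => ite_congr rfl (h_remove s) fun _ => rfl, sum_ite, sum_const_zero,
    add_zero, sum_const, smul_eq_mul, fiberCard]

lemma gaussianMixedMoment_cons_insertNth (s : Fin (L + 1)) (a : ι) (h : Fin L → ι) :
    gaussianMixedMoment (Fin.cons a (s.insertNth a h) : Fin (L + 2) → ι)
      = (fiberCard h a + 1) * gaussianMixedMoment h := by
  rw [← Fin.insertNth_zero']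
  have hc (i : ι) : fiberCard (Fin.insertNth 0 a (s.insertNth a h)) i
      = fiberCard h i + if a = i then 2 else 0 := by
    simp only [fiberCard_insertNth]
    split_ifs <;> rfl
  rw [gaussianMixedMoment_eq_mul_prod_erase _ h (a := a) fun i hi => by
      rw [hc, if_neg (Ne.symm hi), add_zero],
    gaussianMixedMoment_eq_mul_prod_erase h h (a := a) fun _ _ => rfl, hc, if_pos rfl,
    ← mul_assoc]
  rfl

lemma sum_gaussianMixedMoment_mul {R : Type*} [CommSemiring R] (F : (Fin (L + 2) → ι) → R) :
    ∑ f, (gaussianMixedMoment f : R) * F f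
      = ∑ s : Fin (L + 1), ∑ a, ∑ h : Fin L → ι,
          (gaussianMixedMoment h : R) * F (Fin.cons a (s.insertNth a h)) := by
  rw [sum_eq_sum_insertNth 0]
  simp only [Fin.insertNth_zero', gaussianMixedMoment_cons, Nat.cast_sum, Nat.cast_ite,
    Nat.cast_zero, sum_mul, ite_mul, zero_mul]
  refine ((sum_congr rfl fun a _ => sum_comm).trans sum_comm).trans
    (sum_congr rfl fun s _ => sum_congr rfl fun a _ => ?_)
  rw [sum_eq_sum_insertNth s, sum_comm]
  simp only [Fin.insertNth_apply_same, Fin.removeNth_insertNth, sum_ite_eq', mem_univ, if_true]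

variable {R : Type*} [CommSemiring R]

lemma sum_gaussianMixedMoment_mul_prod (x : ι → R) (k : ℕ) :
    ∑ f : Fin (2 * k) → ι, (gaussianMixedMoment f : R) * ∏ t, x (f t)
      = gaussianMoment (2 * k) * (∑ i, x i ^ 2) ^ k := by
  induction k with
  | zero => simp [gaussianMixedMoment, fiberCard, gaussianMoment]
  | succ k ih =>
    have hx (s : Fin (2 * k + 1)) (a : ι) (h : Fin (2 * k) → ι) :
        ∏ t, x ((Fin.cons a (s.insertNth a h) : Fin (2 * k + 2) → ι) t)
          = x a ^ 2 * ∏ t, x (h t) := by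
      rw [Fin.prod_univ_succ]
      simp only [Fin.cons_zero, Fin.cons_succ, prod_comp_insertNth]
      ring
    calc ∑ f : Fin (2 * k + 2) → ι, (gaussianMixedMoment f : R) * ∏ t, x (f t)
        = ∑ _s : Fin (2 * k + 1), ∑ a, x a ^ 2
            * ∑ h : Fin (2 * k) → ι, (gaussianMixedMoment h : R) * ∏ t, x (h t) := by
          simp only [sum_gaussianMixedMoment_mul, hx, mul_sum]
          exact sum_congr rfl fun _ _ => sum_congr rfl fun _ _ => sum_congr rfl fun _ _ => by ring
      _ = gaussianMoment (2 * k + 2) * (∑ i, x i ^ 2) ^ (k + 1) := by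
          rw [ih, ← sum_mul, sum_const, card_univ, Fintype.card_fin, nsmul_eq_mul]
          simp only [gaussianMoment, Nat.cast_mul]
          push_cast
          ring

lemma sum_gaussianMixedMoment_sq (k : ℕ) :
    ∑ f : Fin (2 * k) → ι, (gaussianMixedMoment f : R) ^ 2
      = gaussianMoment (2 * k) * ∏ j ∈ range k, ((Fintype.card ι : R) + 2 * j) := by
  induction k with
  | zero => simp [gaussianMixedMoment, fiberCard, gaussianMoment]
  | succ k ih =>
    have hcard (h : Fin (2 * k) → ι) :
        ∑ a, ((fiberCard h a + 1 : ℕ) : R) = Fintype.card ι + 2 * k := by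
      rw [← Nat.cast_sum, sum_add_distrib, sum_fiberCard]
      simp [add_comm]
    calc ∑ f : Fin (2 * k + 2) → ι, (gaussianMixedMoment f : R) ^ 2
        = ∑ _s : Fin (2 * k + 1), ∑ h : Fin (2 * k) → ι,
            (∑ a, ((fiberCard h a + 1 : ℕ) : R)) * (gaussianMixedMoment h : R) ^ 2 := by
          simp only [sq, sum_gaussianMixedMoment_mul, gaussianMixedMoment_cons_insertNth,
            Nat.cast_mul, sum_mul]
          exact sum_congr rfl fun _ _ => sum_comm.trans
            (sum_congr rfl fun _ _ => sum_congr rfl fun _ _ => by ring)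
      _ = gaussianMoment (2 * k + 2) * ∏ j ∈ range (k + 1), ((Fintype.card ι : R) + 2 * j) := by
          simp only [hcard, ← mul_sum, ih, sum_const, card_univ, Fintype.card_fin, nsmul_eq_mul,
            prod_range_succ]
          simp only [gaussianMoment]
          push_cast
          ring

end MixedMoment

lemma sum_inner_pow_eq_sum_sq {κ ι : Type*} [Fintype κ] [Fintype ι]
    (x : κ → EuclideanSpace ℝ ι) (L : ℕ) :
    ∑ i, ∑ j, ⟪x i, x j⟫ ^ L = ∑ f : Fin L → ι, (∑ i, ∏ t, x i (f t)) ^ 2 := by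
  simp only [sq, sum_mul_sum, PiLp.inner_apply, Real.inner_apply, Fintype.sum_pow,
    ← prod_mul_distrib]
  exact (sum_congr rfl fun _ _ => sum_comm).trans sum_comm

lemma card_sq_mul_gaussianMoment_le {κ ι : Type*} [Fintype κ] [Fintype ι] [DecidableEq ι]
    (x : κ → EuclideanSpace ℝ ι) (hx : ∀ i, ‖x i‖ = 1) (k : ℕ) :
    (Fintype.card κ : ℝ) ^ 2 * gaussianMoment (2 * k)
      ≤ (∑ i, ∑ j, ⟪x i, x j⟫ ^ (2 * k)) * ∏ j ∈ range k, ((Fintype.card ι : ℝ) + 2 * j) := by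
  set v : ℝ := ↑(gaussianMoment (2 * k))
  set T : (Fin (2 * k) → ι) → ℝ := fun f => ∑ i, ∏ t, x i (f t)
  have hTM : ∑ f, T f * gaussianMixedMoment f = Fintype.card κ * v := by
    have hsq (i : κ) : ∑ l, x i l ^ 2 = 1 := by
      rw [← EuclideanSpace.real_norm_sq_eq, hx i, one_pow]
    simp only [T, sum_mul]
    rw [sum_comm]
    simp only [mul_comm _ (gaussianMixedMoment _ : ℝ), sum_gaussianMixedMoment_mul_prod, hsq,
      one_pow, mul_one, sum_const, card_univ, nsmul_eq_mul, v]
  have hCS := sum_mul_sq_le_sq_mul_sq univ T (gaussianMixedMoment · : _ → ℝ)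
  rw [hTM, sum_gaussianMixedMoment_sq, ← sum_inner_pow_eq_sum_sq] at hCS
  have hv : 0 < v := by
    simp only [v, gaussianMoment_two_mul]
    positivity
  exact le_of_mul_le_mul_right (by linear_combination hCS) hv

end RealWelch

open RealWelch

theorem real_welch_average_bound_general (n m : ℕ) (hm : 0 < m)
    (x : Fin m → EuclideanSpace ℝ (Fin n)) (hx : ∀ i, ‖x i‖ = 1)
    (k : ℕ) :
    (1 / (m : ℝ) ^ 2) * ∑ i : Fin m, ∑ j : Fin m, |⟪x i, x j⟫| ^ (2 * k)
      ≥ ∏ j ∈ Finset.range k, (2 * (j : ℝ) + 1) / ((n : ℝ) + 2 * j) := by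
  have key := card_sq_mul_gaussianMoment_le x hx k
  simp only [Fintype.card_fin] at key
  have hnum : ∏ j ∈ range k, (2 * (j : ℝ) + 1) = gaussianMoment (2 * k) := by
    simp [gaussianMoment_two_mul]
  rw [ge_iff_le, prod_div_distrib, hnum]
  refine div_le_of_le_mul₀ (by positivity) (by positivity) ?_
  simp only [(even_two_mul k).pow_abs]
  calc (gaussianMoment (2 * k) : ℝ)
      = 1 / (m : ℝ) ^ 2 * ((m : ℝ) ^ 2 * gaussianMoment (2 * k)) := by field_simp
    _ ≤ _ := by rw [mul_assoc]; gcongr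

/-- The improved (real) Welch average cross-correlation bound for unit vectors in `ℝⁿ`. -/
theorem real_welch_average_bound (n m : ℕ) (hm : 0 < m)
    (x : Fin m → EuclideanSpace ℝ (Fin n)) (hx : ∀ i, ‖x i‖ = 1)
    (k : ℕ) (hk : 0 < k) :
    (1 / (m : ℝ) ^ 2) * ∑ i : Fin m, ∑ j : Fin m, |⟪x i, x j⟫| ^ (2 * k)
      ≥ ∏ j ∈ Finset.range k, (2 * (j : ℝ) + 1) / ((n : ℝ) + 2 * j) :=
  real_welch_average_bound_general n m hm x hx k
end

section
/- Let f : ℝ → ℝ be infinitely differentiable on a neighborhood of 0, with f(0) > 0, f'(0) < 0, and f^{(k)}(0) ≤ 0 for every integer k ≥ 2. Let 0 < α < 1. Then for every positive integer k, the k-th derivative of the function t ↦ f(t)^α at 0 is strictly negative. -/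
open Filter Set Finset
open scoped ContDiff

private lemma iteratedDeriv_congr_nhds {f₁ f : ℝ → ℝ} {x : ℝ} (h : f₁ =ᶠ[nhds x] f) (n : ℕ) :
    iteratedDeriv n f₁ x = iteratedDeriv n f x := by
  simp only [iteratedDeriv_eq_iteratedFDeriv]
  congr 1
  rw [← iteratedFDerivWithin_univ, ← iteratedFDerivWithin_univ]
  exact Filter.EventuallyEq.iteratedFDerivWithin_eq
    (by simpa [nhdsWithin_univ] using h) h.eq_of_nhds n

private lemma iteratedDeriv_pointwise_of_isOpen {U : Set ℝ} (hU : IsOpen U) (f : ℝ → ℝ) (n : ℕ)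
    {x : ℝ} (hx : x ∈ U) : iteratedDerivWithin n f U x = iteratedDeriv n f x := by
  simp only [iteratedDerivWithin_eq_iteratedFDerivWithin, iteratedDeriv_eq_iteratedFDeriv]
  rw [iteratedFDerivWithin_of_isOpen n hU hx]

private lemma iteratedDeriv_cmul (n : ℕ) (c : ℝ) :
    ∀ w : ℝ → ℝ, iteratedDeriv n (fun t => c * w t) = fun x => c * iteratedDeriv n w x := by
  induction n with
  | zero => intro w; simp [iteratedDeriv_zero]
  | succ n IH =>
    intro w
    rw [iteratedDeriv_succ', iteratedDeriv_succ',
      show (deriv fun t => c * w t) = fun t => c * deriv w t from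
        funext fun _ => deriv_const_mul_field c]
    exact IH (deriv w)

private lemma choose_sum_aux (n : ℕ) (A B : ℕ → ℝ) :
    (∑ j ∈ Finset.range (n + 1), (n.choose j : ℝ) * A (j + 1) * B (n - j))
      + ∑ j ∈ Finset.range (n + 1), (n.choose j : ℝ) * A j * B (n - j + 1)
    = ∑ j ∈ Finset.range (n + 2), ((n + 1).choose j : ℝ) * A j * B (n + 1 - j) := by
  rw [Finset.sum_range_succ' (fun j => ((n + 1).choose j : ℝ) * A j * B (n + 1 - j)) (n + 1)]
  have e1 : ∀ j ∈ Finset.range (n + 1),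
      (((n + 1).choose (j + 1) : ℝ)) * A (j + 1) * B (n + 1 - (j + 1))
        = (n.choose j : ℝ) * A (j + 1) * B (n - j)
          + (n.choose (j + 1) : ℝ) * A (j + 1) * B (n - j) := by
    intro j hj
    rw [Nat.succ_sub_succ, Nat.choose_succ_succ]
    push_cast
    ring
  rw [Finset.sum_congr rfl e1, Finset.sum_add_distrib]
  have e2 : ∑ j ∈ Finset.range (n + 1), (n.choose j : ℝ) * A j * B (n - j + 1)
      = (∑ j ∈ Finset.range (n + 1), (n.choose (j + 1) : ℝ) * A (j + 1) * B (n - j))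
        + ((n + 1).choose 0 : ℝ) * A 0 * B (n + 1) := by
    rw [Finset.sum_range_succ (fun j => (n.choose (j + 1) : ℝ) * A (j + 1) * B (n - j)) n,
      Finset.sum_range_succ' (fun j => (n.choose j : ℝ) * A j * B (n - j + 1)) n]
    have e3 : ∀ j ∈ Finset.range n,
        (n.choose (j + 1) : ℝ) * A (j + 1) * B (n - (j + 1) + 1)
          = (n.choose (j + 1) : ℝ) * A (j + 1) * B (n - j) := by
      intro j hj
      rw [Finset.mem_range] at hj
      congr 2
      omega
    rw [Finset.sum_congr rfl e3]
    simp [Nat.choose_succ_self]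
  rw [e2]
  simp only [Nat.sub_zero]
  ring

private lemma iteratedDeriv_mul_of_isOpen {U : Set ℝ} (hU : IsOpen U) (n : ℕ) :
    ∀ (u v : ℝ → ℝ), ContDiffOn ℝ ∞ u U → ContDiffOn ℝ ∞ v U → ∀ x ∈ U,
      iteratedDeriv n (fun t => u t * v t) x =
        ∑ j ∈ Finset.range (n + 1),
          (n.choose j : ℝ) * iteratedDeriv j u x * iteratedDeriv (n - j) v x := by
  induction n with
  | zero => intro u v hu hv x hx; simp
  | succ n IH =>
    intro u v hu hv x hx
    have hu' : ContDiffOn ℝ ∞ (deriv u) U := ((contDiffOn_infty_iff_deriv_of_isOpen hU).1 hu).2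
    have hv' : ContDiffOn ℝ ∞ (deriv v) U := ((contDiffOn_infty_iff_deriv_of_isOpen hU).1 hv).2
    have hud : DifferentiableOn ℝ u U := ((contDiffOn_infty_iff_deriv_of_isOpen hU).1 hu).1
    have hvd : DifferentiableOn ℝ v U := ((contDiffOn_infty_iff_deriv_of_isOpen hU).1 hv).1
    have hEq : (deriv fun t => u t * v t) =ᶠ[nhds x]
        (fun t => deriv u t * v t + u t * deriv v t) := by
      filter_upwards [hU.mem_nhds hx] with y hy
      exact deriv_mul ((hud y hy).differentiableAt (hU.mem_nhds hy))
        ((hvd y hy).differentiableAt (hU.mem_nhds hy))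
    rw [iteratedDeriv_succ', iteratedDeriv_congr_nhds hEq n]
    have hA : ContDiffOn ℝ ∞ (fun t => deriv u t * v t) U := hu'.mul hv
    have hB : ContDiffOn ℝ ∞ (fun t => u t * deriv v t) U := hu.mul hv'
    have hadd : iteratedDeriv n (fun t => deriv u t * v t + u t * deriv v t) x
        = iteratedDeriv n (fun t => deriv u t * v t) x
          + iteratedDeriv n (fun t => u t * deriv v t) x := by
      rw [← iteratedDeriv_pointwise_of_isOpen hU _ n hx,
        ← iteratedDeriv_pointwise_of_isOpen hU _ n hx,
        ← iteratedDeriv_pointwise_of_isOpen hU _ n hx]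
      exact iteratedDerivWithin_add hx hU.uniqueDiffOn
        ((hA.contDiffWithinAt hx).of_le (by exact_mod_cast le_top))
        ((hB.contDiffWithinAt hx).of_le (by exact_mod_cast le_top))
    rw [hadd, IH (deriv u) v hu' hv x hx, IH u (deriv v) hu hv' x hx]
    have h1 : ∀ j ∈ Finset.range (n + 1),
        (n.choose j : ℝ) * iteratedDeriv j (deriv u) x * iteratedDeriv (n - j) v x
          = (n.choose j : ℝ) * iteratedDeriv (j + 1) u x * iteratedDeriv (n - j) v x := by
      intro j _
      rw [← iteratedDeriv_succ']
    have h2 : ∀ j ∈ Finset.range (n + 1),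
        (n.choose j : ℝ) * iteratedDeriv j u x * iteratedDeriv (n - j) (deriv v) x
          = (n.choose j : ℝ) * iteratedDeriv j u x * iteratedDeriv (n - j + 1) v x := by
      intro j _
      rw [← iteratedDeriv_succ']
    rw [Finset.sum_congr rfl h1, Finset.sum_congr rfl h2]
    exact choose_sum_aux n (fun j => iteratedDeriv j u x) (fun j => iteratedDeriv j v x)

/-- If `f` is smooth near `0` with `f(0) > 0`, `f'(0) < 0` and all higher derivatives
at `0` nonpositive, then for `0 < α < 1` every derivative of `t ↦ f(t)^α` at `0` is
strictly negative. -/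
theorem derivatives_of_rpow_composition_neg
    (f : ℝ → ℝ) (s : Set ℝ) (hs : s ∈ nhds (0 : ℝ)) (hf : ContDiffOn ℝ (⊤ : ℕ∞) f s)
    (h0 : 0 < f 0) (h1 : deriv f 0 < 0)
    (hhigher : ∀ k : ℕ, 2 ≤ k → iteratedDeriv k f 0 ≤ 0)
    (α : ℝ) (hα0 : 0 < α) (hα1 : α < 1) :
    ∀ k : ℕ, 0 < k → iteratedDeriv k (fun t => f t ^ α) 0 < 0 := by
  classical
  -- an open neighborhood of 0 inside s on which f is positive
  set t : Set ℝ := interior s with ht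
  have hto : IsOpen t := isOpen_interior
  have hts : t ⊆ s := interior_subset
  have h0t : (0 : ℝ) ∈ t := mem_interior_iff_mem_nhds.2 hs
  have hfc : ContDiffOn ℝ ∞ f t := (hf.of_le (by simp)).mono hts
  set U : Set ℝ := t ∩ f ⁻¹' Set.Ioi 0 with hUdef
  have hUopen : IsOpen U := hfc.continuousOn.isOpen_inter_preimage hto isOpen_Ioi
  have h0U : (0 : ℝ) ∈ U := ⟨h0t, Set.mem_Ioi.2 h0⟩
  have hfU : ContDiffOn ℝ ∞ f U := hfc.mono Set.inter_subset_left
  have hpos : ∀ x ∈ U, 0 < f x := fun x hx => hx.2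
  have hdiff : ∀ x ∈ U, DifferentiableAt ℝ f x := fun x hx =>
    (hfU.contDiffAt (hUopen.mem_nhds hx)).differentiableAt (by simp)
  -- the auxiliary function p = f ^ (α - 1)
  set p : ℝ → ℝ := fun t => f t ^ (α - 1) with hpdef
  have hpU : ContDiffOn ℝ ∞ p U :=
    hfU.rpow_const_of_ne fun x hx => (hpos x hx).ne'
  have hdp : ContDiffOn ℝ ∞ (deriv p) U := ((contDiffOn_infty_iff_deriv_of_isOpen hUopen).1 hpU).2
  have hdf : ContDiffOn ℝ ∞ (deriv f) U := ((contDiffOn_infty_iff_deriv_of_isOpen hUopen).1 hfU).2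
  -- derivative formula for p
  have hder_p : ∀ x ∈ U, deriv p x = deriv f x * (α - 1) * f x ^ (α - 2) := by
    intro x hx
    have := ((hdiff x hx).hasDerivAt.rpow_const (p := α - 1) (Or.inl (hpos x hx).ne')).deriv
    simpa [show α - 1 - 1 = α - 2 by ring] using this
  -- ODE for p on U :  f * p' = (α - 1) * (f' * p)
  have hODE : Set.EqOn (fun y => f y * deriv p y) (fun y => (α - 1) * (deriv f y * p y)) U := by
    intro x hx
    have hne : f x ≠ 0 := (hpos x hx).ne'
    have hmul : f x ^ (α - 2) * f x = f x ^ (α - 1) := by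
      rw [show α - 1 = (α - 2) + 1 by ring, Real.rpow_add_one hne]
    show f x * deriv p x = (α - 1) * (deriv f x * p x)
    rw [hder_p x hx]
    simp only [hpdef]
    linear_combination ((α - 1) * deriv f x) * hmul
  -- notation for derivatives at 0
  set F : ℕ → ℝ := fun j => iteratedDeriv j f 0 with hF
  set P : ℕ → ℝ := fun j => iteratedDeriv j p 0 with hP
  have hF0 : 0 < F 0 := by simpa [hF, iteratedDeriv_zero] using h0
  have hF1 : F 1 < 0 := by simpa [hF, iteratedDeriv_one] using h1
  have hFk : ∀ j, 2 ≤ j → F j ≤ 0 := hhigher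
  have hF1' : ∀ j, 1 ≤ j → F j ≤ 0 := by
    intro j hj
    rcases Nat.lt_or_ge j 2 with hj2 | hj2
    · have : j = 1 := by omega
      simpa [this] using hF1.le
    · exact hFk j hj2
  -- the key negative sum
  have sumR : ∀ m : ℕ, (∀ j, j ≤ m → 0 < P j) →
      (∑ j ∈ Finset.range (m + 1), (m.choose j : ℝ) * F (j + 1) * P (m - j)) < 0 := by
    intro m hH
    rw [Finset.sum_range_succ' (fun j => (m.choose j : ℝ) * F (j + 1) * P (m - j)) m]
    have hlast : (m.choose 0 : ℝ) * F (0 + 1) * P (m - 0) < 0 := by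
      have h' : F 1 * P m < 0 := mul_neg_of_neg_of_pos hF1 (hH m le_rfl)
      simpa using h'
    have hsum : (∑ j ∈ Finset.range m, (m.choose (j + 1) : ℝ) * F (j + 1 + 1) * P (m - (j + 1)))
        ≤ 0 := by
      apply Finset.sum_nonpos
      intro j hj
      rw [Finset.mem_range] at hj
      have hC : (0 : ℝ) ≤ (m.choose (j + 1) : ℝ) := Nat.cast_nonneg _
      have hFneg : F (j + 1 + 1) ≤ 0 := hFk _ (by omega)
      have hHpos : 0 < P (m - (j + 1)) := hH _ (by omega)
      exact mul_nonpos_of_nonpos_of_nonneg (mul_nonpos_of_nonneg_of_nonpos hC hFneg) hHpos.le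
    linarith
  -- all derivatives of p at 0 are positive
  have Ppos : ∀ k : ℕ, 0 < P k := by
    intro k
    induction k using Nat.strong_induction_on with
    | _ k IH =>
      match k with
      | 0 => simpa [hP, hpdef, iteratedDeriv_zero] using Real.rpow_pos_of_pos h0 (α - 1)
      | (k + 1) =>
        have IH' : ∀ j, j ≤ k → 0 < P j := fun j hj => IH j (by omega)
        -- apply the Leibniz formula to both sides of the ODE
        have hL := iteratedDeriv_mul_of_isOpen hUopen k f (deriv p) hfU hdp 0 h0U
        have hR := iteratedDeriv_mul_of_isOpen hUopen k (deriv f) p hdf hpU 0 h0U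
        have heq : iteratedDeriv k (fun y => f y * deriv p y) 0
            = (α - 1) * iteratedDeriv k (fun y => deriv f y * p y) 0 := by
          rw [iteratedDeriv_congr_nhds (hODE.eventuallyEq_of_mem (hUopen.mem_nhds h0U)) k,
            iteratedDeriv_cmul k (α - 1) (fun y => deriv f y * p y)]
        rw [hL, hR] at heq
        have hLred : ∀ j ∈ Finset.range (k + 1),
            (k.choose j : ℝ) * iteratedDeriv j f 0 * iteratedDeriv (k - j) (deriv p) 0
              = (k.choose j : ℝ) * F j * P (k - j + 1) := by
          intro j _
          rw [← iteratedDeriv_succ']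
        have hRred : ∀ j ∈ Finset.range (k + 1),
            (k.choose j : ℝ) * iteratedDeriv j (deriv f) 0 * iteratedDeriv (k - j) p 0
              = (k.choose j : ℝ) * F (j + 1) * P (k - j) := by
          intro j _
          rw [← iteratedDeriv_succ']
        rw [Finset.sum_congr rfl hLred, Finset.sum_congr rfl hRred] at heq
        -- peel off the j = 0 term of the left sum
        rw [Finset.sum_range_succ' (fun j => (k.choose j : ℝ) * F j * P (k - j + 1)) k] at heq
        have hpeel : ∀ j ∈ Finset.range k,
            (k.choose (j + 1) : ℝ) * F (j + 1) * P (k - (j + 1) + 1)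
              = (k.choose (j + 1) : ℝ) * F (j + 1) * P (k - j) := by
          intro j hj
          rw [Finset.mem_range] at hj
          congr 2
          omega
        rw [Finset.sum_congr rfl hpeel] at heq
        simp only [Nat.choose_zero_right, Nat.cast_one, one_mul, Nat.sub_zero] at heq
        -- heq : ∑ + F 0 * P (k+1) = (α - 1) * ∑R
        have hR0 : (∑ j ∈ Finset.range (k + 1), (k.choose j : ℝ) * F (j + 1) * P (k - j)) < 0 :=
          sumR k IH'
        have hLsum : (∑ j ∈ Finset.range k,
            (k.choose (j + 1) : ℝ) * F (j + 1) * P (k - j)) ≤ 0 := by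
          apply Finset.sum_nonpos
          intro j hj
          rw [Finset.mem_range] at hj
          have hC : (0 : ℝ) ≤ (k.choose (j + 1) : ℝ) := Nat.cast_nonneg _
          have hFneg : F (j + 1) ≤ 0 := hF1' _ (by omega)
          have hHpos : 0 < P (k - j) := IH' _ (by omega)
          exact mul_nonpos_of_nonpos_of_nonneg (mul_nonpos_of_nonneg_of_nonpos hC hFneg) hHpos.le
        have hposR : 0 < (α - 1) *
            ∑ j ∈ Finset.range (k + 1), (k.choose j : ℝ) * F (j + 1) * P (k - j) :=
          mul_pos_of_neg_of_neg (by linarith) hR0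
        have hFP : 0 < F 0 * P (k + 1) := by linarith
        nlinarith [hFP, hF0]
  -- now handle g = f ^ α
  intro k hk
  obtain ⟨m, rfl⟩ := Nat.exists_eq_succ_of_ne_zero hk.ne'
  have hder_g : Set.EqOn (deriv fun y => f y ^ α) (fun y => α * (deriv f y * p y)) U := by
    intro x hx
    have := ((hdiff x hx).hasDerivAt.rpow_const (p := α) (Or.inl (hpos x hx).ne')).deriv
    rw [this, hpdef]
    ring
  rw [iteratedDeriv_succ',
    iteratedDeriv_congr_nhds (hder_g.eventuallyEq_of_mem (hUopen.mem_nhds h0U)) m,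
    iteratedDeriv_cmul m α (fun y => deriv f y * p y)]
  have hR := iteratedDeriv_mul_of_isOpen hUopen m (deriv f) p hdf hpU 0 h0U
  have hRred : ∀ j ∈ Finset.range (m + 1),
      (m.choose j : ℝ) * iteratedDeriv j (deriv f) 0 * iteratedDeriv (m - j) p 0
        = (m.choose j : ℝ) * F (j + 1) * P (m - j) := by
    intro j _
    rw [← iteratedDeriv_succ']
  have hval : iteratedDeriv m (fun y => deriv f y * p y) 0
      = ∑ j ∈ Finset.range (m + 1), (m.choose j : ℝ) * F (j + 1) * P (m - j) :=
    hR.trans (Finset.sum_congr rfl hRred)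
  show α * iteratedDeriv m (fun y => deriv f y * p y) 0 < 0
  rw [hval]
  exact mul_neg_of_pos_of_neg hα0 (sumR m fun j _ => Ppos j)
end
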